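/- If in a spatial congestion game all resources are identical to each player, i.e., g_r^i(n) = g^i(n) for all resources r and all n, with each g^i non-increasing, then the function φ(σ) = (1/2) Σ_i n^i(σ), counting the number of edges whose endpoints choose the same resource, strictly decreases with every strict improvement step; hence the game has the finite improvement property and a pure strategy Nash equilibrium. -/

import Mathlib

open scoped Classical

/-- Number of neighbors of `i` in `G` choosing resource `r` under profile `σ`. -/
noncomputable def cnt {ι R : Type*} [Fintype ι]
    (G : SimpleGraph ι) (σ : ι → R) (i : ι) (r : R) : ℕ :=
  (Finset.univ.filter (fun j => G.Adj i j ∧ σ j = r)).card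

/-- When all resources are identical to each player, player `i`'s payoff is
`g i (n^i(σ) + 1)` where `n^i(σ)` is the number of neighbors sharing `i`'s resource. -/
noncomputable def idPayoff {ι R : Type*} [Fintype ι]
    (G : SimpleGraph ι) (g : ι → ℕ → ℤ) (σ : ι → R) (i : ι) : ℤ :=
  g i (cnt G σ i (σ i) + 1)

/-- A strict improvement step. -/
def Improves {ι R : Type*} [Fintype ι]
    (G : SimpleGraph ι) (g : ι → ℕ → ℤ) (σ σ' : ι → R) : Prop :=
  ∃ i : ι, (∀ j, j ≠ i → σ' j = σ j) ∧ idPayoff G g σ i < idPayoff G g σ' i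

/-- `φ(σ) = (1/2) Σ_i n^i(σ)`: the number of edges whose endpoints choose the same resource. -/
noncomputable def sameEdges {ι R : Type*} [Fintype ι]
    (G : SimpleGraph ι) (σ : ι → R) : ℕ :=
  (Finset.univ.filter (fun p : ι × ι => G.Adj p.1 p.2 ∧ σ p.1 = σ p.2)).card / 2

/-! A move of player `i` only affects the edges at `i`, and the monochromatic ones among them are
exactly the `n^i` neighbours entering `i`'s payoff. As `g^i` is non-increasing, a strict
improvement strictly lowers `n^i`, hence `φ`. A natural-number potential admits no infinite
descending chain, and a profile minimising `φ` admits no improvement, i.e. it is an equilibrium. -/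

open Finset SimpleGraph

section
variable {ι R : Type*}

def sameResourceGraph (G : SimpleGraph ι) (σ : ι → R) : SimpleGraph ι where
  Adj a b := G.Adj a b ∧ σ a = σ b
  symm := ⟨fun _ _ h => ⟨h.1.symm, h.2.symm⟩⟩
  loopless := ⟨fun a h => G.loopless.irrefl a h.1⟩

@[simp]
lemma sameResourceGraph_adj {G : SimpleGraph ι} {σ : ι → R} {a b : ι} :
    (sameResourceGraph G σ).Adj a b ↔ G.Adj a b ∧ σ a = σ b := Iff.rfl

lemma deleteIncidenceSet_sameResourceGraph_eq {G : SimpleGraph ι} {σ σ' : ι → R} {i : ι}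
    (h : ∀ j, j ≠ i → σ' j = σ j) :
    (sameResourceGraph G σ').deleteIncidenceSet i =
      (sameResourceGraph G σ).deleteIncidenceSet i := by
  ext a b
  simp only [deleteIncidenceSet_adj, sameResourceGraph_adj]
  constructor
  · rintro ⟨⟨hab, hσ⟩, ha, hb⟩
    exact ⟨⟨hab, by rwa [h a ha, h b hb] at hσ⟩, ha, hb⟩
  · rintro ⟨⟨hab, hσ⟩, ha, hb⟩
    exact ⟨⟨hab, by rwa [h a ha, h b hb]⟩, ha, hb⟩

lemma SimpleGraph.card_edgeFinset_eq_add_degree {V : Type*} [Fintype V] (H : SimpleGraph V)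
    [DecidableRel H.Adj] (x : V) :
    #H.edgeFinset = #(H.deleteIncidenceSet x).edgeFinset + H.degree x := by
  rw [card_edgeFinset_deleteIncidenceSet, Nat.sub_add_cancel (H.degree_le_card_edgeFinset x)]

variable [Fintype ι]

lemma sameEdges_eq_card_edgeFinset (G : SimpleGraph ι) (σ : ι → R) :
    sameEdges G σ = #(sameResourceGraph G σ).edgeFinset := by
  have hdarts : (univ.filter fun p : ι × ι => G.Adj p.1 p.2 ∧ σ p.1 = σ p.2).card
      = Fintype.card (sameResourceGraph G σ).Dart := by
    rw [← Fintype.card_subtype]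
    exact Fintype.card_congr
      ⟨fun p => ⟨p.1, p.2⟩, fun d => ⟨d.toProd, d.adj⟩, fun _ => rfl, fun _ => rfl⟩
  rw [sameEdges, hdarts, dart_card_eq_twice_card_edges, Nat.mul_div_cancel_left _ two_pos]

lemma degree_sameResourceGraph (G : SimpleGraph ι) (σ : ι → R) (i : ι) :
    (sameResourceGraph G σ).degree i = cnt G σ i (σ i) := by
  rw [← card_neighborFinset_eq_degree, cnt]
  congr 1
  ext j
  simp [eq_comm]

lemma cnt_eq_of_forall_ne_eq (G : SimpleGraph ι) {σ σ' : ι → R} {i : ι}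
    (h : ∀ j, j ≠ i → σ' j = σ j) (r : R) : cnt G σ' i r = cnt G σ i r := by
  unfold cnt
  congr 1
  ext j
  simp only [mem_filter, mem_univ, true_and, and_congr_right_iff]
  exact fun hij => by rw [h j hij.ne']

lemma sameEdges_eq_add_cnt (G : SimpleGraph ι) (σ : ι → R) (i : ι) :
    sameEdges G σ =
      #((sameResourceGraph G σ).deleteIncidenceSet i).edgeFinset + cnt G σ i (σ i) := by
  rw [sameEdges_eq_card_edgeFinset, card_edgeFinset_eq_add_degree _ i, degree_sameResourceGraph]

lemma sameEdges_lt_of_improves {G : SimpleGraph ι} {g : ι → ℕ → ℤ}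
    (hg : ∀ i, Antitone (g i))
    {σ σ' : ι → R} (h : Improves G g σ σ') : sameEdges G σ' < sameEdges G σ := by
  obtain ⟨i, hoff, hpay⟩ := h
  have hcnt : cnt G σ' i (σ' i) < cnt G σ i (σ i) :=
    Nat.lt_of_add_lt_add_right ((hg i).reflect_lt hpay)
  have hrest : #((sameResourceGraph G σ').deleteIncidenceSet i).edgeFinset
      = #((sameResourceGraph G σ).deleteIncidenceSet i).edgeFinset := by
    congr 1
    ext
    rw [mem_edgeFinset, mem_edgeFinset, deleteIncidenceSet_sameResourceGraph_eq hoff]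
  rw [sameEdges_eq_add_cnt G σ' i, sameEdges_eq_add_cnt G σ i, hrest]
  exact Nat.add_lt_add_left hcnt _

lemma improves_update {G : SimpleGraph ι} {g : ι → ℕ → ℤ} {σ : ι → R} {i : ι} {r : R}
    (h : g i (cnt G σ i (σ i) + 1) < g i (cnt G σ i r + 1)) :
    Improves G g σ (Function.update σ i r) := by
  have hoff : ∀ j, j ≠ i → Function.update σ i r j = σ j := fun j hj =>
    Function.update_of_ne hj _ _
  refine ⟨i, hoff, ?_⟩
  rwa [idPayoff, idPayoff, Function.update_self, cnt_eq_of_forall_ne_eq G hoff]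

end

theorem fip_identical_resources_general {ι R : Type*} [Fintype ι] [Nonempty R]
    (G : SimpleGraph ι) (g : ι → ℕ → ℤ) (hg : ∀ i, Antitone (g i)) :
    (∀ σ σ' : ι → R, Improves G g σ σ' → sameEdges G σ' < sameEdges G σ) ∧
    (¬ ∃ f : ℕ → (ι → R), ∀ n, Improves G g (f n) (f (n + 1))) ∧
    (∃ σ : ι → R, ∀ (i : ι) (r : R),
        g i (cnt G σ i r + 1) ≤ g i (cnt G σ i (σ i) + 1)) := by
  have potential : ∀ σ σ' : ι → R, Improves G g σ σ' →
      sameEdges G σ' < sameEdges G σ :=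
    fun _ _ => sameEdges_lt_of_improves hg
  refine ⟨potential, ?_, ?_⟩
  · rintro ⟨f, hf⟩
    exact not_strictAnti_of_wellFoundedLT (sameEdges G ∘ f)
      (strictAnti_nat_of_succ_lt fun n => potential _ _ (hf n))
  · refine ⟨Function.argmin (sameEdges G), fun i r => not_lt.mp fun hlt => ?_⟩
    exact Function.not_lt_argmin _ _ (potential _ _ (improves_update hlt))

/-- If all resources are identical to each player (`g_r^i = g^i` for all `r`), with each `g^i`
non-increasing, then the number of monochromatic edges strictly decreases at every strict
improvement step; hence the game has the finite improvement property and a pure NE. -/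
theorem fip_identical_resources {ι R : Type*} [Fintype ι] [Fintype R] [Nonempty R]
    (G : SimpleGraph ι) (g : ι → ℕ → ℤ) (hg : ∀ i, Antitone (g i)) :
    (∀ σ σ' : ι → R, Improves G g σ σ' → sameEdges G σ' < sameEdges G σ) ∧
    (¬ ∃ f : ℕ → (ι → R), ∀ n, Improves G g (f n) (f (n + 1))) ∧
    (∃ σ : ι → R, ∀ (i : ι) (r : R),
        g i (cnt G σ i r + 1) ≤ g i (cnt G σ i (σ i) + 1)) :=
  fip_identical_resources_general G g hg
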